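/- arXiv:2509.14630 — 6 statements merged into one kernel-verified Lean document; each statement's English description precedes it below -/
import Mathlib

section
/- Work in the group GL(4, ℝ) of invertible 4×4 real matrices (homogeneous rigid transformations). Define the decoder D : (GL(4,ℝ) × GL(4,ℝ)) → GL(4,ℝ) → GL(4,ℝ) by D (T_be, T_bc) y = T_bc * y * T_bc⁻¹ * T_be. Then for all A, B, T_be, T_bc, y ∈ GL(4, ℝ), D (A * T_be * B, A * T_bc) y = A * (D (T_be, T_bc) y) * B. That is, D is equivariant to the embodiment transformation group acting on configurations by (T_be, T_bc) ↦ (A T_be B, A T_bc) and on actions by a ↦ A a B. -/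
/-- The decoder `D (T_be, T_bc) y = T_bc * y * T_bc⁻¹ * T_be`. -/
def decoder (m : GL (Fin 4) ℝ × GL (Fin 4) ℝ) (y : GL (Fin 4) ℝ) : GL (Fin 4) ℝ :=
  m.2 * y * m.2⁻¹ * m.1

/-- The decoder is equivariant to the embodiment transformation group acting on
configurations by `(T_be, T_bc) ↦ (A * T_be * B, A * T_bc)` and on actions by
`a ↦ A * a * B`. -/
theorem decoder_equivariant (A B Tbe Tbc y : GL (Fin 4) ℝ) :
    decoder (A * Tbe * B, A * Tbc) y = A * decoder (Tbe, Tbc) y * B := by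
  unfold decoder
  group
end

section
/- Represent rigid transformations as pairs (R, t) with R a 3×3 real special orthogonal matrix and t ∈ ℝ³, composed by (R₁,t₁)·(R₂,t₂) = (R₁R₂, R₁t₂ + t₁). Define the revised decoder D_r on a configuration m = ((R_be, t_be), (R_bc, t_bc)) and a network output φ = (φ^R, φ^t) with φ^R ∈ SO(3), φ^t ∈ ℝ³ by D_r(m, φ) = (R_bc * φ^R * R_bcᵀ * R_be, R_bc • φ^t + t_be). Then for every base transformation A = (R_A, t_A) ∈ SE(3), D_r((A·(R_be,t_be), A·(R_bc,t_bc)), φ) = A · D_r(m, φ). That is, D_r is equivariant to base-frame transformations. -/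
open Matrix

/-- A rigid transformation, represented as a pair `(R, t)` of a 3×3 matrix and a vector. -/
abbrev Rigid := Matrix (Fin 3) (Fin 3) ℝ × (Fin 3 → ℝ)

/-- Composition `(R₁,t₁)·(R₂,t₂) = (R₁R₂, R₁t₂ + t₁)`. -/
def rcomp (x y : Rigid) : Rigid := (x.1 * y.1, x.1 *ᵥ y.2 + x.2)

/-- The revised decoder `D_r` of Eq. (13):
`D_r(((R_be,t_be),(R_bc,t_bc)), (φ^R, φ^t)) = (R_bc φ^R R_bcᵀ R_be, R_bc φ^t + t_be)`. -/
def Dr (m : Rigid × Rigid) (φ : Rigid) : Rigid :=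
  (m.2.1 * φ.1 * (m.2.1)ᵀ * m.1.1, m.2.1 *ᵥ φ.2 + m.1.2)

/-! The rotation part of `D_r` is equivariant because the base rotation `R_A` enters the conjugate
`R_bc φ^R R_bcᵀ` and then meets `R_be`, so that `R_Aᵀ R_A = 1` cancels it once; the translation
part is affine in `(R_bc, t_be)` and needs no orthogonality at all. -/

section

variable {n R : Type*} [Fintype n] [CommSemiring R]

theorem Matrix.mul_mulVec_add_mulVec_add (A B : Matrix n n R) (v t s : n → R) :
    (A * B) *ᵥ v + (A *ᵥ t + s) = A *ᵥ (B *ᵥ v + t) + s := by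
  rw [← mulVec_mulVec, mulVec_add, add_assoc]

variable [DecidableEq n]

theorem Matrix.transpose_mul_mul_cancel_left {A : Matrix n n R} (hA : Aᵀ * A = 1)
    (B C : Matrix n n R) : (A * B)ᵀ * (A * C) = Bᵀ * C := by
  rw [transpose_mul, mul_assoc, ← mul_assoc Aᵀ, hA, one_mul]

theorem Matrix.conj_mul_left_of_transpose_mul_self {A : Matrix n n R} (hA : Aᵀ * A = 1)
    (B P C : Matrix n n R) : A * B * P * (A * B)ᵀ * (A * C) = A * (B * P * Bᵀ * C) := by
  rw [mul_assoc _ (A * B)ᵀ, transpose_mul_mul_cancel_left hA]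
  simp only [mul_assoc]

end

theorem Dr_base_equivariant_general
    (RA : Matrix (Fin 3) (Fin 3) ℝ) (hRA : RA ∈ Matrix.specialOrthogonalGroup (Fin 3) ℝ)
    (tA : Fin 3 → ℝ)
    (Rbe : Matrix (Fin 3) (Fin 3) ℝ)
    (tbe : Fin 3 → ℝ)
    (Rbc : Matrix (Fin 3) (Fin 3) ℝ)
    (tbc : Fin 3 → ℝ)
    (φR : Matrix (Fin 3) (Fin 3) ℝ)
    (φt : Fin 3 → ℝ) :
    Dr (rcomp (RA, tA) (Rbe, tbe), rcomp (RA, tA) (Rbc, tbc)) (φR, φt) =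
      rcomp (RA, tA) (Dr ((Rbe, tbe), (Rbc, tbc)) (φR, φt)) := by
  have hRA_orth : RAᵀ * RA = 1 := hRA.1.1
  exact Prod.ext (conj_mul_left_of_transpose_mul_self hRA_orth Rbc φR Rbe)
    (mul_mulVec_add_mulVec_add RA Rbc φt tbe tA)

/-- The revised decoder `D_r` is equivariant to base-frame transformations
`(T_be, T_bc) ↦ (A·T_be, A·T_bc)`, `a ↦ A·a`, for `A ∈ SE(3)`. -/
theorem Dr_base_equivariant
    (RA : Matrix (Fin 3) (Fin 3) ℝ) (hRA : RA ∈ Matrix.specialOrthogonalGroup (Fin 3) ℝ)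
    (tA : Fin 3 → ℝ)
    (Rbe : Matrix (Fin 3) (Fin 3) ℝ) (hRbe : Rbe ∈ Matrix.specialOrthogonalGroup (Fin 3) ℝ)
    (tbe : Fin 3 → ℝ)
    (Rbc : Matrix (Fin 3) (Fin 3) ℝ) (hRbc : Rbc ∈ Matrix.specialOrthogonalGroup (Fin 3) ℝ)
    (tbc : Fin 3 → ℝ)
    (φR : Matrix (Fin 3) (Fin 3) ℝ) (hφR : φR ∈ Matrix.specialOrthogonalGroup (Fin 3) ℝ)
    (φt : Fin 3 → ℝ) :
    Dr (rcomp (RA, tA) (Rbe, tbe), rcomp (RA, tA) (Rbc, tbc)) (φR, φt) =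
      rcomp (RA, tA) (Dr ((Rbe, tbe), (Rbc, tbc)) (φR, φt)) :=
  Dr_base_equivariant_general RA hRA tA Rbe tbe Rbc tbc φR φt
end

section
/- Represent rigid transformations as pairs (R, t) with R a 3×3 real special orthogonal matrix and t ∈ ℝ³, composed by (R₁,t₁)·(R₂,t₂) = (R₁R₂, R₁t₂ + t₁). Define the revised decoder D_r on a configuration m = ((R_be, t_be), (R_bc, t_bc)) and a network output φ = (φ^R, φ^t) with φ^R ∈ SO(3), φ^t ∈ ℝ³ by D_r(m, φ) = (R_bc * φ^R * R_bcᵀ * R_be, R_bc • φ^t + t_be). Then for every pure end-effector rotation B = (R_B, 0) with R_B ∈ SO(3), D_r(((R_be,t_be)·B, (R_bc,t_bc)), φ) = D_r(m, φ) · B. That is, D_r is equivariant to rotational re-definitions of the end-effector frame. -/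
open Matrix

theorem rcomp_rotation (x : Rigid) (R : Matrix (Fin 3) (Fin 3) ℝ) :
    rcomp x (R, 0) = (x.1 * R, x.2) := by
  simp [rcomp]

theorem Dr_rcomp_rotation (m : Rigid × Rigid) (φ : Rigid) (R : Matrix (Fin 3) (Fin 3) ℝ) :
    Dr (rcomp m.1 (R, 0), m.2) φ = rcomp (Dr m φ) (R, 0) := by
  simp only [rcomp_rotation, Dr, Matrix.mul_assoc]

theorem Dr_ee_rotation_equivariant_general
    (RB : Matrix (Fin 3) (Fin 3) ℝ)
    (Rbe : Matrix (Fin 3) (Fin 3) ℝ)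
    (tbe : Fin 3 → ℝ)
    (Rbc : Matrix (Fin 3) (Fin 3) ℝ)
    (tbc : Fin 3 → ℝ)
    (φR : Matrix (Fin 3) (Fin 3) ℝ)
    (φt : Fin 3 → ℝ) :
    Dr (rcomp (Rbe, tbe) (RB, 0), (Rbc, tbc)) (φR, φt) =
      rcomp (Dr ((Rbe, tbe), (Rbc, tbc)) (φR, φt)) (RB, 0) :=
  Dr_rcomp_rotation ((Rbe, tbe), (Rbc, tbc)) (φR, φt) RB

/-- The revised decoder `D_r` is equivariant to rotational re-definitions of the
end-effector frame: for a pure end-effector rotation `B = (R_B, 0)`,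
`D_r((T_be·B, T_bc), φ) = D_r(m, φ) · B`. -/
theorem Dr_ee_rotation_equivariant
    (RB : Matrix (Fin 3) (Fin 3) ℝ) (hRB : RB ∈ Matrix.specialOrthogonalGroup (Fin 3) ℝ)
    (Rbe : Matrix (Fin 3) (Fin 3) ℝ) (hRbe : Rbe ∈ Matrix.specialOrthogonalGroup (Fin 3) ℝ)
    (tbe : Fin 3 → ℝ)
    (Rbc : Matrix (Fin 3) (Fin 3) ℝ) (hRbc : Rbc ∈ Matrix.specialOrthogonalGroup (Fin 3) ℝ)
    (tbc : Fin 3 → ℝ)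
    (φR : Matrix (Fin 3) (Fin 3) ℝ) (hφR : φR ∈ Matrix.specialOrthogonalGroup (Fin 3) ℝ)
    (φt : Fin 3 → ℝ) :
    Dr (rcomp (Rbe, tbe) (RB, 0), (Rbc, tbc)) (φR, φt) =
      rcomp (Dr ((Rbe, tbe), (Rbc, tbc)) (φR, φt)) (RB, 0) :=
  Dr_ee_rotation_equivariant_general RB Rbe tbe Rbc tbc φR φt
end

section
/- Represent rigid transformations as pairs (R, t) with R a 3×3 real special orthogonal matrix and t ∈ ℝ³, composed by (R₁,t₁)·(R₂,t₂) = (R₁R₂, R₁t₂ + t₁). Define the revised decoder D_r on a configuration m = ((R_be, t_be), (R_bc, t_bc)) and a network output φ = (φ^R, φ^t) with φ^R ∈ SO(3), φ^t ∈ ℝ³ by D_r(m, φ) = (R_bc * φ^R * R_bcᵀ * R_be, R_bc • φ^t + t_be). Then D_r is NOT equivariant to pure end-effector translations: there exist a configuration m, a network output φ, and a nonzero vector t_B ∈ ℝ³ such that, with B = (1, t_B), D_r((T_be·B, T_bc), φ) ≠ D_r(m, φ) · B. -/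
/-!
A pure end-effector translation `B = (1, t_B)` shifts the translation decoded by `D_r` by
`R_be t_B`, whereas composing the decoded pose with `B` shifts it by `R t_B`, where
`R = R_bc φ^R R_bcᵀ R_be` is the decoded rotation. The two agree only when `R_bc φ^R R_bcᵀ` fixes
`R_be t_B`, which fails e.g. for a quarter turn about the `z`-axis acting on `e₁`.
-/

open Matrix

theorem Dr_translate_eq_rcomp_iff (Rbe Rbc φR : Matrix (Fin 3) (Fin 3) ℝ)
    (tbe tbc φt tB : Fin 3 → ℝ) :
    Dr (rcomp (Rbe, tbe) (1, tB), (Rbc, tbc)) (φR, φt) =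
        rcomp (Dr ((Rbe, tbe), (Rbc, tbc)) (φR, φt)) (1, tB) ↔
      (Rbc * φR * Rbcᵀ * Rbe) *ᵥ tB = Rbe *ᵥ tB := by
  simp only [Dr, rcomp, mul_one, Prod.mk.injEq, true_and]
  constructor <;> intro h
  · linear_combination -h
  · linear_combination -h

def quarterTurnZ : Matrix (Fin 3) (Fin 3) ℝ := !![0, -1, 0; 1, 0, 0; 0, 0, 1]

theorem quarterTurnZ_mem_specialOrthogonalGroup :
    quarterTurnZ ∈ specialOrthogonalGroup (Fin 3) ℝ := by
  rw [mem_specialOrthogonalGroup_iff, mem_orthogonalGroup_iff]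
  constructor
  · ext i j
    fin_cases i <;> fin_cases j <;> simp [quarterTurnZ, mul_apply, Fin.sum_univ_three]
  · simp [quarterTurnZ, det_fin_three]

theorem quarterTurnZ_mulVec_e₁ : quarterTurnZ *ᵥ ![1, 0, 0] = ![0, 1, 0] := by
  ext i
  fin_cases i <;> simp [quarterTurnZ, mulVec, dotProduct, Fin.sum_univ_three]

/-- The revised decoder `D_r` is NOT equivariant to pure end-effector translations:
there exist a configuration, a network output, and a nonzero `t_B` such that, with
`B = (1, t_B)`, `D_r((T_be·B, T_bc), φ) ≠ D_r(m, φ) · B`. -/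
theorem Dr_not_ee_translation_equivariant :
    ∃ (Rbe Rbc φR : Matrix (Fin 3) (Fin 3) ℝ) (tbe tbc φt tB : Fin 3 → ℝ),
      Rbe ∈ Matrix.specialOrthogonalGroup (Fin 3) ℝ ∧
      Rbc ∈ Matrix.specialOrthogonalGroup (Fin 3) ℝ ∧
      φR ∈ Matrix.specialOrthogonalGroup (Fin 3) ℝ ∧
      tB ≠ 0 ∧
      Dr (rcomp (Rbe, tbe) (1, tB), (Rbc, tbc)) (φR, φt) ≠
        rcomp (Dr ((Rbe, tbe), (Rbc, tbc)) (φR, φt)) (1, tB) := by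
  refine ⟨1, 1, quarterTurnZ, 0, 0, 0, ![1, 0, 0], one_mem _, one_mem _,
    quarterTurnZ_mem_specialOrthogonalGroup, fun h => by simpa using congrFun h 0, ?_⟩
  rw [Ne, Dr_translate_eq_rcomp_iff]
  simp [quarterTurnZ_mulVec_e₁]
end

section
/- Represent rigid transformations as pairs (R, t) with R a 3×3 real special orthogonal matrix and t ∈ ℝ³, composed by (R₁,t₁)·(R₂,t₂) = (R₁R₂, R₁t₂ + t₁). Given a configuration m = ((R_be, t_be), (R_bc, t_bc)) and an action a = (R_be∗, t_be∗), define the revised learning objective y_r(m, a) = ( R_bcᵀ * R_be∗ * R_beᵀ * R_bc , R_bcᵀ • (t_be∗ − t_be) ). Then y_r is invariant under all base transformations and all pure end-effector rotations: for every A = (R_A, t_A) ∈ SE(3) and every B = (R_B, 0) with R_B ∈ SO(3), y_r( (A·T_be·B, A·T_bc), A·(R_be∗,t_be∗)·B ) = y_r( m, (R_be∗, t_be∗) ). -/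
open Matrix

/-- The revised learning objective of Eq. (13):
`y_r(((R_be,t_be),(R_bc,t_bc)), (R_be∗,t_be∗)) =
  (R_bcᵀ R_be∗ R_beᵀ R_bc, R_bcᵀ (t_be∗ − t_be))`. -/
def yr (m : Rigid × Rigid) (a : Rigid) : Rigid :=
  ((m.2.1)ᵀ * a.1 * (m.1.1)ᵀ * m.2.1, (m.2.1)ᵀ *ᵥ (a.2 - m.1.2))

theorem yr_rcomp_left (A : Rigid) (hA : A.1ᵀ * A.1 = 1) (Tbe Tbc a : Rigid) :
    yr (rcomp A Tbe, rcomp A Tbc) (rcomp A a) = yr (Tbe, Tbc) a := by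
  have cancel (X : Matrix (Fin 3) (Fin 3) ℝ) : A.1ᵀ * (A.1 * X) = X := by
    rw [← Matrix.mul_assoc, hA, Matrix.one_mul]
  simp only [yr, rcomp, transpose_mul, add_sub_add_right_eq_sub, ← mulVec_sub, mulVec_mulVec,
    Matrix.mul_assoc, cancel, hA, Matrix.mul_one]

theorem yr_rcomp_right_rotation (R : Matrix (Fin 3) (Fin 3) ℝ) (hR : R * Rᵀ = 1)
    (Tbe Tbc a : Rigid) :
    yr (rcomp Tbe (R, 0), Tbc) (rcomp a (R, 0)) = yr (Tbe, Tbc) a := by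
  have cancel (X : Matrix (Fin 3) (Fin 3) ℝ) : R * (Rᵀ * X) = X := by
    rw [← Matrix.mul_assoc, hR, Matrix.one_mul]
  simp only [yr, rcomp, transpose_mul, mulVec_zero, zero_add, Matrix.mul_assoc, cancel]

theorem yr_invariant_general
    (RA : Matrix (Fin 3) (Fin 3) ℝ) (hRA : RA ∈ Matrix.specialOrthogonalGroup (Fin 3) ℝ)
    (tA : Fin 3 → ℝ)
    (RB : Matrix (Fin 3) (Fin 3) ℝ) (hRB : RB ∈ Matrix.specialOrthogonalGroup (Fin 3) ℝ)
    (Rbe : Matrix (Fin 3) (Fin 3) ℝ)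
    (tbe : Fin 3 → ℝ)
    (Rbc : Matrix (Fin 3) (Fin 3) ℝ)
    (tbc : Fin 3 → ℝ)
    (Rbes : Matrix (Fin 3) (Fin 3) ℝ)
    (tbes : Fin 3 → ℝ) :
    yr (rcomp (rcomp (RA, tA) (Rbe, tbe)) (RB, 0),
        rcomp (RA, tA) (Rbc, tbc))
       (rcomp (rcomp (RA, tA) (Rbes, tbes)) (RB, 0)) =
      yr ((Rbe, tbe), (Rbc, tbc)) (Rbes, tbes) := by
  rw [yr_rcomp_right_rotation RB ((mem_orthogonalGroup_iff _ _).1 hRB.1),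
    yr_rcomp_left (RA, tA) ((mem_orthogonalGroup_iff' _ _).1 hRA.1)]

/-- The revised learning objective `y_r` is invariant under all base transformations
`A = (R_A, t_A) ∈ SE(3)` and all pure end-effector rotations `B = (R_B, 0)`. -/
theorem yr_invariant
    (RA : Matrix (Fin 3) (Fin 3) ℝ) (hRA : RA ∈ Matrix.specialOrthogonalGroup (Fin 3) ℝ)
    (tA : Fin 3 → ℝ)
    (RB : Matrix (Fin 3) (Fin 3) ℝ) (hRB : RB ∈ Matrix.specialOrthogonalGroup (Fin 3) ℝ)
    (Rbe : Matrix (Fin 3) (Fin 3) ℝ) (hRbe : Rbe ∈ Matrix.specialOrthogonalGroup (Fin 3) ℝ)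
    (tbe : Fin 3 → ℝ)
    (Rbc : Matrix (Fin 3) (Fin 3) ℝ) (hRbc : Rbc ∈ Matrix.specialOrthogonalGroup (Fin 3) ℝ)
    (tbc : Fin 3 → ℝ)
    (Rbes : Matrix (Fin 3) (Fin 3) ℝ) (hRbes : Rbes ∈ Matrix.specialOrthogonalGroup (Fin 3) ℝ)
    (tbes : Fin 3 → ℝ) :
    yr (rcomp (rcomp (RA, tA) (Rbe, tbe)) (RB, 0),
        rcomp (RA, tA) (Rbc, tbc))
       (rcomp (rcomp (RA, tA) (Rbes, tbes)) (RB, 0)) =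
      yr ((Rbe, tbe), (Rbc, tbc)) (Rbes, tbes) :=
  yr_invariant_general RA hRA tA RB hRB Rbe tbe Rbc tbc Rbes tbes
end

section
/- Let n ≥ 1, d = 4n, and N ≥ 1. For a 4×4 real invertible matrix T, let σ(T) be the d×d block-diagonal matrix with n copies of T on the diagonal. Fix q_i ∈ ℝ^d, and for j = 1,…,N fix k_j, v_j ∈ ℝ^d. For camera poses T_1, …, T_N ∈ GL(4,ℝ), define scores s_j(T) = q_iᵀ • (σ(T_i⁻¹) * σ(T_j)) • k_j, softmax weights w_j(T) = exp(s_j(T)/√d) / Σ_k exp(s_k(T)/√d), and output o_i(T) = σ(T_i)⁻¹ • Σ_j w_j(T) (σ(T_j) • v_j). Then for every A ∈ GL(4,ℝ), o_i(A*T_1, …, A*T_N) = o_i(T_1, …, T_N): the attention output with relative camera pose embedding is invariant to a common base-frame change of all camera poses. -/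
open Matrix Kronecker

/-- `σ(T)` is the `d × d` (`d = 4n`) block-diagonal matrix consisting of `n` copies of the
4×4 matrix `T` along the diagonal. -/
noncomputable def sigmaBlock (n : ℕ) (T : Matrix (Fin 4) (Fin 4) ℝ) :
    Matrix (Fin n × Fin 4) (Fin n × Fin 4) ℝ :=
  (1 : Matrix (Fin n) (Fin n) ℝ) ⊗ₖ T

/-- The attention score `s_j = q_iᵀ (σ(T_i⁻¹) σ(T_j)) k_j`. -/
noncomputable def score (n N : ℕ) (i : Fin N) (q : Fin n × Fin 4 → ℝ)
    (k : Fin N → Fin n × Fin 4 → ℝ) (T : Fin N → GL (Fin 4) ℝ) (j : Fin N) : ℝ :=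
  q ⬝ᵥ (sigmaBlock n (((T i)⁻¹ : GL (Fin 4) ℝ) : Matrix (Fin 4) (Fin 4) ℝ) *
        sigmaBlock n ((T j : GL (Fin 4) ℝ) : Matrix (Fin 4) (Fin 4) ℝ)) *ᵥ k j

/-- The softmax weight `w_j = exp(s_j/√d) / Σ_k exp(s_k/√d)`, `d = 4n`. -/
noncomputable def weight (n N : ℕ) (i : Fin N) (q : Fin n × Fin 4 → ℝ)
    (k : Fin N → Fin n × Fin 4 → ℝ) (T : Fin N → GL (Fin 4) ℝ) (j : Fin N) : ℝ :=
  Real.exp (score n N i q k T j / Real.sqrt (4 * n)) /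
    ∑ k' : Fin N, Real.exp (score n N i q k T k' / Real.sqrt (4 * n))

/-- The attention output `o_i = σ(T_i)⁻¹ Σ_j w_j (σ(T_j) v_j)` with relative camera pose
embedding. -/
noncomputable def attnOut (n N : ℕ) (i : Fin N) (q : Fin n × Fin 4 → ℝ)
    (k v : Fin N → Fin n × Fin 4 → ℝ) (T : Fin N → GL (Fin 4) ℝ) : Fin n × Fin 4 → ℝ :=
  sigmaBlock n (((T i)⁻¹ : GL (Fin 4) ℝ) : Matrix (Fin 4) (Fin 4) ℝ) *ᵥ
    ∑ j : Fin N, weight n N i q k T j •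
      (sigmaBlock n ((T j : GL (Fin 4) ℝ) : Matrix (Fin 4) (Fin 4) ℝ) *ᵥ v j)

/-- `σ` is multiplicative. -/
lemma sigmaBlock_mul (n : ℕ) (M P : Matrix (Fin 4) (Fin 4) ℝ) :
    sigmaBlock n (M * P) = sigmaBlock n M * sigmaBlock n P := by
  simp [sigmaBlock, ← Matrix.mul_kronecker_mul]

/-- The coerced inverse cancels at the matrix level. -/
lemma coe_inv_mul_coe (A : GL (Fin 4) ℝ) :
    ((A⁻¹ : GL (Fin 4) ℝ) : Matrix (Fin 4) (Fin 4) ℝ) * (A : Matrix (Fin 4) (Fin 4) ℝ) = 1 := by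
  rw [← Units.val_mul]; simp

/-- The conjugating product depends only on the relative pose. -/
lemma sigmaBlock_key (n : ℕ) (A Ti Tj : GL (Fin 4) ℝ) :
    sigmaBlock n (((A * Ti)⁻¹ : GL (Fin 4) ℝ) : Matrix (Fin 4) (Fin 4) ℝ) *
      sigmaBlock n ((A * Tj : GL (Fin 4) ℝ) : Matrix (Fin 4) (Fin 4) ℝ) =
    sigmaBlock n ((Ti⁻¹ : GL (Fin 4) ℝ) : Matrix (Fin 4) (Fin 4) ℝ) *
      sigmaBlock n ((Tj : GL (Fin 4) ℝ) : Matrix (Fin 4) (Fin 4) ℝ) := by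
  rw [← sigmaBlock_mul, ← sigmaBlock_mul]
  simp only [_root_.mul_inv_rev, Units.val_mul, mul_assoc]
  rw [← mul_assoc ((A⁻¹ : GL (Fin 4) ℝ) : Matrix (Fin 4) (Fin 4) ℝ), coe_inv_mul_coe, one_mul]

/-- `mulVec` commutes with weighted sums. -/
lemma mulVec_sum_smul {m : Type*} [Fintype m] (N : ℕ)
    (M : Matrix m m ℝ) (c : Fin N → ℝ) (x : Fin N → m → ℝ) :
    M *ᵥ ∑ j : Fin N, c j • x j = ∑ j : Fin N, c j • (M *ᵥ x j) := by
  simp [← Matrix.mulVecLin_apply, map_sum, _root_.map_smul, -Matrix.mulVecBilin_apply]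

/-- The attention output with relative camera pose embedding is invariant to a common
base-frame change of all camera poses: `o_i(A T_1, …, A T_N) = o_i(T_1, …, T_N)`. -/
theorem attention_output_invariant (n N : ℕ) (hn : 1 ≤ n) (hN : 1 ≤ N) (i : Fin N)
    (q : Fin n × Fin 4 → ℝ) (k v : Fin N → Fin n × Fin 4 → ℝ)
    (T : Fin N → GL (Fin 4) ℝ) (A : GL (Fin 4) ℝ) :
    attnOut n N i q k v (fun j => A * T j) = attnOut n N i q k v T := by
  have hs : ∀ j, score n N i q k (fun j => A * T j) j = score n N i q k T j := by
    intro j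
    unfold score
    rw [sigmaBlock_key]
  have hw : ∀ j, weight n N i q k (fun j => A * T j) j = weight n N i q k T j := by
    intro j
    unfold weight
    simp only [hs]
  unfold attnOut
  simp only [hw, Units.val_mul, sigmaBlock_mul, _root_.mul_inv_rev]
  simp only [← Matrix.mulVec_mulVec, Matrix.mulVec_smul]
  have hA : sigmaBlock n ((A⁻¹ : GL (Fin 4) ℝ) : Matrix (Fin 4) (Fin 4) ℝ) *
      sigmaBlock n ((A : GL (Fin 4) ℝ) : Matrix (Fin 4) (Fin 4) ℝ) = 1 := by
    rw [← sigmaBlock_mul, coe_inv_mul_coe]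
    simp [sigmaBlock, Matrix.one_kronecker_one]
  rw [← mulVec_sum_smul]
  simp only [Matrix.mulVec_mulVec, mul_assoc, hA, mul_one]
end
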